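/- arXiv:2405.11246 — 8 statements merged into one kernel-verified Lean document; each statement's English description precedes it below -/
import Mathlib

section
/- Let p ≥ 1, let Γ = diag(γ₁, …, γ_p) and L = diag(l₁, …, l_p) be real diagonal p × p matrices with γ₁ ≥ γ₂ ≥ … ≥ γ_p > 0 and l₁ > l₂ > … > l_p > 0. Then for every real orthogonal p × p matrix H, trace(Γ⁻¹ · H · L · Hᵀ) ≥ trace(Γ⁻¹ · L) = ∑_{i=1}^p l_i / γ_i. -/
open Matrix

lemma key_doublyStochastic {p : ℕ} (D : Matrix (Fin p) (Fin p) ℝ)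
    (hD : D ∈ doublyStochastic ℝ (Fin p)) (a b : Fin p → ℝ) (hab : Antivary a b) :
    ∑ i, a i * b i ≤ ∑ i, ∑ j, D i j * (a i * b j) := by
  obtain ⟨w, hw0, hw1, hwD⟩ := exists_eq_sum_perm_of_mem_doublyStochastic hD
  have hDapp : ∀ i j, D i j = ∑ σ : Equiv.Perm (Fin p),
      w σ * (if σ i = j then 1 else 0) := by
    intro i j
    rw [← hwD]
    simp [Matrix.sum_apply, Equiv.Perm.permMatrix, PEquiv.toMatrix_apply,
      Equiv.toPEquiv_apply]
  have expand : ∀ i, ∑ j, D i j * (a i * b j) =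
      ∑ σ : Equiv.Perm (Fin p), w σ * (a i * b (σ i)) := by
    intro i
    calc ∑ j, D i j * (a i * b j)
        = ∑ j, ∑ σ : Equiv.Perm (Fin p),
            w σ * ((if σ i = j then 1 else 0) * (a i * b j)) := by
          simp_rw [hDapp, Finset.sum_mul, mul_assoc]
      _ = ∑ σ : Equiv.Perm (Fin p), ∑ j,
            w σ * ((if σ i = j then 1 else 0) * (a i * b j)) := Finset.sum_comm
      _ = ∑ σ : Equiv.Perm (Fin p), w σ * (a i * b (σ i)) := by
          refine Finset.sum_congr rfl fun σ _ => ?_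
          rw [← Finset.mul_sum]
          congr 1
          simp [ite_mul]
  calc ∑ i, a i * b i = ∑ σ : Equiv.Perm (Fin p), w σ * ∑ i, a i * b i := by
        rw [← Finset.sum_mul, hw1, one_mul]
    _ ≤ ∑ σ : Equiv.Perm (Fin p), w σ * ∑ i, a i * b (σ i) := by
        refine Finset.sum_le_sum fun σ _ => ?_
        exact mul_le_mul_of_nonneg_left (hab.sum_mul_le_sum_mul_comp_perm) (hw0 σ)
    _ = ∑ σ : Equiv.Perm (Fin p), ∑ i, w σ * (a i * b (σ i)) := by
        simp_rw [Finset.mul_sum]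
    _ = ∑ i, ∑ σ : Equiv.Perm (Fin p), w σ * (a i * b (σ i)) := Finset.sum_comm
    _ = ∑ i, ∑ j, D i j * (a i * b j) := by
        exact Finset.sum_congr rfl fun i _ => (expand i).symm

/-- von Neumann trace inequality for the Stein-loss trace term:
for diagonal `Γ = diagonal γ` (antitone, positive) and `L = diagonal l`
(strictly decreasing, positive), every orthogonal `H` satisfies
`trace (Γ⁻¹ * H * L * Hᵀ) ≥ trace (Γ⁻¹ * L) = ∑ i, l i / γ i`. -/
theorem trace_inv_conj_ge_trace_inv_diag
    (p : ℕ) (hp : 1 ≤ p) (γ l : Fin p → ℝ)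
    (hγ : Antitone γ) (hγpos : ∀ i, 0 < γ i)
    (hl : StrictAnti l) (hlpos : ∀ i, 0 < l i) :
    ∀ H : Matrix (Fin p) (Fin p) ℝ, H * Hᵀ = 1 →
      Matrix.trace ((Matrix.diagonal γ)⁻¹ * H * Matrix.diagonal l * Hᵀ) ≥
        Matrix.trace ((Matrix.diagonal γ)⁻¹ * Matrix.diagonal l) ∧
      Matrix.trace ((Matrix.diagonal γ)⁻¹ * Matrix.diagonal l) = ∑ i, l i / γ i := by
  intro H hH
  have hγne : ∀ i, γ i ≠ 0 := fun i => (hγpos i).ne'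
  have hinv : (Matrix.diagonal γ)⁻¹ = Matrix.diagonal (fun i => (γ i)⁻¹) := by
    apply Matrix.inv_eq_right_inv
    rw [Matrix.diagonal_mul_diagonal]
    have : (fun i => γ i * (γ i)⁻¹) = fun _ => (1 : ℝ) :=
      funext fun i => mul_inv_cancel₀ (hγne i)
    rw [this, Matrix.diagonal_one]
  have hHtH : Hᵀ * H = 1 := mul_eq_one_comm.mp hH
  set D : Matrix (Fin p) (Fin p) ℝ := fun i j => (H i j) ^ 2 with hDdef
  have hDmem : D ∈ doublyStochastic ℝ (Fin p) := by
    rw [mem_doublyStochastic_iff_sum]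
    refine ⟨fun i j => sq_nonneg _, fun i => ?_, fun j => ?_⟩
    · have := congrFun (congrFun hH i) i
      simpa [hDdef, Matrix.mul_apply, Matrix.one_apply, sq] using this
    · have := congrFun (congrFun hHtH j) j
      simpa [hDdef, Matrix.mul_apply, Matrix.one_apply, sq] using this
  have hab : Antivary (fun i => (γ i)⁻¹) l := by
    intro i j hij
    have hji : j < i := by
      by_contra h
      exact absurd hij (not_lt.mpr (hl.antitone (not_lt.mp h)))
    exact inv_anti₀ (hγpos i) (hγ hji.le)
  have htr2 : Matrix.trace ((Matrix.diagonal γ)⁻¹ * Matrix.diagonal l) = ∑ i, l i / γ i := by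
    rw [hinv, Matrix.diagonal_mul_diagonal, Matrix.trace_diagonal]
    exact Finset.sum_congr rfl fun i _ => by rw [inv_mul_eq_div]
  have e1 : (Matrix.diagonal (fun i => (γ i)⁻¹) * H * Matrix.diagonal l) =
      Matrix.of (fun i j => (γ i)⁻¹ * H i j * l j) := by
    ext i j
    rw [Matrix.mul_diagonal, Matrix.diagonal_mul]
    rfl
  have htr1 : Matrix.trace ((Matrix.diagonal γ)⁻¹ * H * Matrix.diagonal l * Hᵀ) =
      ∑ i, ∑ j, D i j * ((γ i)⁻¹ * l j) := by
    rw [hinv, e1]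
    simp only [Matrix.trace, Matrix.diag, Matrix.mul_apply, Matrix.of_apply,
      Matrix.transpose_apply]
    refine Finset.sum_congr rfl fun i _ => Finset.sum_congr rfl fun j _ => ?_
    simp only [hDdef, sq]
    ring
  refine ⟨?_, htr2⟩
  rw [ge_iff_le, htr1, htr2]
  calc ∑ i, l i / γ i = ∑ i, (γ i)⁻¹ * l i :=
        Finset.sum_congr rfl fun i _ => by rw [inv_mul_eq_div]
    _ ≤ ∑ i, ∑ j, D i j * ((γ i)⁻¹ * l j) :=
        key_doublyStochastic D hDmem (fun i => (γ i)⁻¹) l hab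
end

section
/- Let p ≥ 1, let Γ = diag(γ₁, …, γ_p) and L = diag(l₁, …, l_p) be real diagonal p × p matrices with γ₁ ≥ γ₂ ≥ … ≥ γ_p > 0 and l₁ > l₂ > … > l_p > 0. Then the minimum of H ↦ trace(Γ⁻¹ · H · L · Hᵀ) over the orthogonal group O(p) is attained at H = I, i.e. trace(Γ⁻¹ · L) is a least element of the set {trace(Γ⁻¹ · H · L · Hᵀ) : H orthogonal}. -/
/-!
Writing `a = γ⁻¹`, the objective is `∑ i j, a i * H i j ^ 2 * l j = a ⬝ᵥ (D *ᵥ l)`, where the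
entrywise square `D` of an orthogonal `H` is doubly stochastic. By Birkhoff's theorem `D` is a
convex combination of permutation matrices, and for each of them the rearrangement inequality
(`a` increasing, `l` decreasing) gives `a ⬝ᵥ l ≤ a ⬝ᵥ (l ∘ σ)`; the value at `H = 1` is `a ⬝ᵥ l`.
-/

open Matrix

namespace Matrix

variable {n R : Type*} [Fintype n]

theorem trace_diagonal_mul_mul_diagonal_mul_transpose [CommSemiring R] [DecidableEq n]
    (a l : n → R) (H : Matrix n n R) :
    trace (diagonal a * H * diagonal l * Hᵀ) = a ⬝ᵥ (H.map (· ^ 2) *ᵥ l) := by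
  simp only [trace, diag_apply, mul_apply (N := Hᵀ), mul_diagonal, diagonal_mul, transpose_apply,
    dotProduct, mulVec, map_apply, Finset.mul_sum]
  refine Finset.sum_congr rfl fun i _ => Finset.sum_congr rfl fun j _ => ?_
  ring

variable [Field R] [LinearOrder R] [IsStrictOrderedRing R]

theorem map_sq_mem_doublyStochastic_of_mul_transpose_eq_one [DecidableEq n]
    {H : Matrix n n R} (hH : H * Hᵀ = 1) : H.map (· ^ 2) ∈ doublyStochastic R n := by
  have hH' : Hᵀ * H = 1 := mul_eq_one_comm.mp hH
  refine mem_doublyStochastic_iff_sum.mpr ⟨fun i j => sq_nonneg _, fun i => ?_, fun j => ?_⟩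
  · simpa [mul_apply, sq] using congrFun (congrFun hH i) i
  · simpa [mul_apply, sq] using congrFun (congrFun hH' j) j

theorem _root_.Antivary.dotProduct_le_dotProduct_mulVec [DecidableEq n] {f g : n → R}
    (hfg : Antivary f g) {D : Matrix n n R} (hD : D ∈ doublyStochastic R n) :
    f ⬝ᵥ g ≤ f ⬝ᵥ (D *ᵥ g) := by
  obtain ⟨w, hw_nonneg, hw_sum, rfl⟩ := exists_eq_sum_perm_of_mem_doublyStochastic hD
  calc f ⬝ᵥ g = ∑ σ, w σ * (f ⬝ᵥ g) := by rw [← Finset.sum_mul, hw_sum, one_mul]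
    _ ≤ ∑ σ, w σ * (f ⬝ᵥ (g ∘ σ)) := Finset.sum_le_sum fun σ _ =>
        mul_le_mul_of_nonneg_left hfg.sum_mul_le_sum_mul_comp_perm (hw_nonneg σ)
    _ = f ⬝ᵥ ((∑ σ, w σ • σ.permMatrix R) *ᵥ g) := by
        simp only [sum_mulVec, smul_mulVec, permMatrix_mulVec, dotProduct_sum, dotProduct_smul,
          smul_eq_mul]

end Matrix

theorem isLeast_trace_inv_conj_orthogonal_general
    (p : ℕ) (γ l : Fin p → ℝ)
    (hγ : Antitone γ) (hγpos : ∀ i, 0 < γ i)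
    (hl : StrictAnti l) :
    IsLeast
      {x : ℝ | ∃ H : Matrix (Fin p) (Fin p) ℝ, H * Hᵀ = 1 ∧
        x = Matrix.trace ((Matrix.diagonal γ)⁻¹ * H * Matrix.diagonal l * Hᵀ)}
      (Matrix.trace ((Matrix.diagonal γ)⁻¹ * Matrix.diagonal l)) := by
  have hinv : (diagonal γ)⁻¹ = diagonal γ⁻¹ :=
    inv_eq_left_inv <| by
      rw [diagonal_mul_diagonal, ← diagonal_one]
      exact congrArg diagonal (funext fun i => inv_mul_cancel₀ (hγpos i).ne')
  have hγinv : Monotone γ⁻¹ := fun i j hij => inv_anti₀ (hγpos j) (hγ hij)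
  refine ⟨⟨1, by simp, by simp⟩, ?_⟩
  rintro _ ⟨H, hH, rfl⟩
  have hrearrangement := (hγinv.antivary hl.antitone).dotProduct_le_dotProduct_mulVec
    (map_sq_mem_doublyStochastic_of_mul_transpose_eq_one hH)
  rwa [hinv, trace_diagonal_mul_mul_diagonal_mul_transpose, diagonal_mul_diagonal,
    trace_diagonal]

/-- The minimum of `H ↦ trace (Γ⁻¹ * H * L * Hᵀ)` over the orthogonal group is
attained at `H = 1`, i.e. `trace (Γ⁻¹ * L)` is a least element of the set of
values of this map over orthogonal matrices. -/
theorem isLeast_trace_inv_conj_orthogonal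
    (p : ℕ) (hp : 1 ≤ p) (γ l : Fin p → ℝ)
    (hγ : Antitone γ) (hγpos : ∀ i, 0 < γ i)
    (hl : StrictAnti l) (hlpos : ∀ i, 0 < l i) :
    IsLeast
      {x : ℝ | ∃ H : Matrix (Fin p) (Fin p) ℝ, H * Hᵀ = 1 ∧
        x = Matrix.trace ((Matrix.diagonal γ)⁻¹ * H * Matrix.diagonal l * Hᵀ)}
      (Matrix.trace ((Matrix.diagonal γ)⁻¹ * Matrix.diagonal l)) :=
  isLeast_trace_inv_conj_orthogonal_general p γ l hγ hγpos hl
end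

section
/- Let S be a real symmetric positive definite p × p matrix with spectral decomposition S = U · L · Uᵀ, where U is orthogonal and L = diag(l₁, …, l_p) with l₁ > … > l_p > 0. Then for every real orthogonal p × p matrix V and every diagonal matrix Γ = diag(γ₁, …, γ_p) with γ₁ ≥ … ≥ γ_p > 0, one has trace(V · Γ⁻¹ · Vᵀ · S) − log(det(Γ⁻¹ · L)) ≥ p, and equality holds when V = U and Γ = L. In other words, over spectral reparameterizations Σ = V Γ Vᵀ, the function (V, Γ) ↦ trace(Σ⁻¹ S) − log det(Σ⁻¹ S) is minimized at V = U, Γ = L. -/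
/-!
With `Σ⁻¹ = V Γ⁻¹ Vᵀ`, orthogonality of `U` and `V` gives `det (Γ⁻¹ L) = det (Σ⁻¹ S)`, so the
quantity is Stein's loss `trace (Σ⁻¹ S) - log det (Σ⁻¹ S)`. Factoring the positive definite
`Σ⁻¹ = Bᴴ B`, the product `Σ⁻¹ S` has the trace and determinant of the positive definite matrix
`B S Bᴴ`, whose eigenvalues `μᵢ > 0` satisfy `μᵢ - log μᵢ ≥ 1` since `log μ ≤ μ - 1`.
At `V = U`, `Γ = L` one has `Σ⁻¹ S = 1`, and the bound is attained.
-/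

open Matrix

namespace Matrix

variable {n : Type*} [Fintype n] [DecidableEq n]

theorem PosDef.card_le_trace_sub_log_det {B : Matrix n n ℝ} (hB : B.PosDef) :
    (Fintype.card n : ℝ) ≤ B.trace - Real.log B.det := by
  have hev := hB.eigenvalues_pos
  rw [hB.isHermitian.trace_eq_sum_eigenvalues, hB.isHermitian.det_eq_prod_eigenvalues]
  simp only [RCLike.ofReal_real_eq_id, id]
  rw [Real.log_prod fun i _ => (hev i).ne', ← Finset.sum_sub_distrib, Fintype.card_eq_sum_ones,
    Nat.cast_sum, Nat.cast_one]
  refine Finset.sum_le_sum fun i _ => ?_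
  linarith [Real.log_le_sub_one_of_pos (hev i)]

open scoped MatrixOrder in
theorem PosDef.card_le_trace_mul_sub_log_det_mul {A S : Matrix n n ℝ} (hA : A.PosDef)
    (hS : S.PosDef) :
    (Fintype.card n : ℝ) ≤ (A * S).trace - Real.log (A * S).det := by
  obtain ⟨B, rfl⟩ := CStarAlgebra.nonneg_iff_eq_star_mul_self.mp hA.posSemidef.nonneg
  have hB : IsUnit B := by
    have hdetA := (isUnit_iff_isUnit_det _).mp hA.isUnit
    rw [det_mul] at hdetA
    exact (isUnit_iff_isUnit_det B).mpr (isUnit_of_mul_isUnit_right hdetA)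
  have hBSB : (B * S * Bᴴ).PosDef :=
    hS.mul_mul_conjTranspose_same (vecMul_injective_iff_isUnit.mpr hB)
  have htrace : (star B * B * S).trace = (B * S * Bᴴ).trace := by
    rw [star_eq_conjTranspose, mul_assoc, trace_mul_comm]
  have hdet : (star B * B * S).det = (B * S * Bᴴ).det := by
    simp only [star_eq_conjTranspose, det_mul]; ring
  rw [htrace, hdet]
  exact hBSB.card_le_trace_sub_log_det

theorem det_mul_mul_transpose_of_mul_transpose_eq_one {α : Type*} [CommRing α]
    {U : Matrix n n α} (hU : U * Uᵀ = 1) (A : Matrix n n α) : (U * A * Uᵀ).det = A.det := by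
  rw [← inv_eq_right_inv hU]
  exact det_conj ((isUnit_iff_isUnit_det U).mpr (isUnit_det_of_right_inverse hU)) A

end Matrix

theorem stein_loss_spectral_minimized_at_sample_decomposition_general
    (p : ℕ)
    (S U : Matrix (Fin p) (Fin p) ℝ) (l : Fin p → ℝ)
    (hS : S.PosDef) (hU : U * Uᵀ = 1)
    (hlpos : ∀ i, 0 < l i)
    (hdecomp : S = U * Matrix.diagonal l * Uᵀ) :
    (∀ (V : Matrix (Fin p) (Fin p) ℝ) (γ : Fin p → ℝ),
      V * Vᵀ = 1 → Antitone γ → (∀ i, 0 < γ i) →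
      (p : ℝ) ≤ Matrix.trace (V * (Matrix.diagonal γ)⁻¹ * Vᵀ * S) -
        Real.log (((Matrix.diagonal γ)⁻¹ * Matrix.diagonal l).det)) ∧
    Matrix.trace (U * (Matrix.diagonal l)⁻¹ * Uᵀ * S) -
        Real.log (((Matrix.diagonal l)⁻¹ * Matrix.diagonal l).det) = (p : ℝ) := by
  constructor
  · intro V γ hV _ hγ
    have hVΓV : (V * (diagonal γ)⁻¹ * Vᵀ).PosDef := by
      have hVunit : IsUnit V := (isUnit_iff_isUnit_det V).mpr (isUnit_det_of_right_inverse hV)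
      simpa only [conjTranspose_eq_transpose_of_trivial] using
        (PosDef.diagonal hγ).inv.mul_mul_conjTranspose_same (vecMul_injective_iff_isUnit.mpr hVunit)
    have hdet : (V * (diagonal γ)⁻¹ * Vᵀ * S).det = ((diagonal γ)⁻¹ * diagonal l).det := by
      rw [det_mul, det_mul_mul_transpose_of_mul_transpose_eq_one hV, hdecomp,
        det_mul_mul_transpose_of_mul_transpose_eq_one hU, det_mul]
    simpa only [hdet, Fintype.card_fin] using hVΓV.card_le_trace_mul_sub_log_det_mul hS
  · have hL : (diagonal l)⁻¹ * diagonal l = 1 :=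
      nonsing_inv_mul _ ((isUnit_iff_isUnit_det _).mp (PosDef.diagonal hlpos).isUnit)
    have hSinv : U * (diagonal l)⁻¹ * Uᵀ * S = 1 := by
      rw [hdecomp]
      calc U * (diagonal l)⁻¹ * Uᵀ * (U * diagonal l * Uᵀ)
          = U * ((diagonal l)⁻¹ * (Uᵀ * U) * diagonal l) * Uᵀ := by simp only [mul_assoc]
        _ = 1 := by rw [mul_eq_one_comm.mp hU, mul_one, hL, mul_one, hU]
    rw [hSinv, hL]
    simp

/-- Over spectral reparameterizations `Σ = V * Γ * Vᵀ`, the Stein log-likelihood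
term `trace (V * Γ⁻¹ * Vᵀ * S) - log det (Γ⁻¹ * L)` is at least `p`, and
equality holds at `V = U`, `Γ = L`, where `S = U * L * Uᵀ` is the spectral
decomposition of the positive definite matrix `S`. -/
theorem stein_loss_spectral_minimized_at_sample_decomposition
    (p : ℕ) (hp : 1 ≤ p)
    (S U : Matrix (Fin p) (Fin p) ℝ) (l : Fin p → ℝ)
    (hS : S.PosDef) (hU : U * Uᵀ = 1)
    (hl : StrictAnti l) (hlpos : ∀ i, 0 < l i)
    (hdecomp : S = U * Matrix.diagonal l * Uᵀ) :
    (∀ (V : Matrix (Fin p) (Fin p) ℝ) (γ : Fin p → ℝ),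
      V * Vᵀ = 1 → Antitone γ → (∀ i, 0 < γ i) →
      (p : ℝ) ≤ Matrix.trace (V * (Matrix.diagonal γ)⁻¹ * Vᵀ * S) -
        Real.log (((Matrix.diagonal γ)⁻¹ * Matrix.diagonal l).det)) ∧
    Matrix.trace (U * (Matrix.diagonal l)⁻¹ * Uᵀ * S) -
        Real.log (((Matrix.diagonal l)⁻¹ * Matrix.diagonal l).det) = (p : ℝ) :=
  stein_loss_spectral_minimized_at_sample_decomposition_general p S U l hS hU hlpos hdecomp
end

section
/- Let n and p be natural numbers with n ≥ p ≥ 1. Then ∑_{i=1}^p log(n − i + 1) ≤ ∑_{i=1}^p log(n + p − 2i + 1). (This inequality expresses that the minimum risk of the best D(p)-equivariant estimator is no larger than that of the best G_T⁺-equivariant Stein estimator under the Stein loss, since the common terms E[log χ²_{n−i+1}] cancel.) -/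
/-- Risk comparison: `∑_{i=1}^p log (n - i + 1) ≤ ∑_{i=1}^p log (n + p - 2i + 1)`
for `n ≥ p ≥ 1`. -/
theorem sum_log_risk_D_le_risk_Stein
    (n p : ℕ) (hp : 1 ≤ p) (hnp : p ≤ n) :
    ∑ i ∈ Finset.Icc 1 p, Real.log ((n : ℝ) - i + 1) ≤
      ∑ i ∈ Finset.Icc 1 p, Real.log ((n : ℝ) + p - 2 * i + 1) := by
  apply Finset.sum_le_sum
  intro i hi
  rw [Finset.mem_Icc] at hi
  have hin : (i : ℝ) ≤ n := by exact_mod_cast hi.2.trans hnp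
  have hip : (i : ℝ) ≤ p := by exact_mod_cast hi.2
  apply Real.log_le_log (by linarith) (by linarith)
end

section
/- Let n and p be natural numbers with n ≥ p ≥ 2. Then ∑_{i=1}^p log(n − i + 1) < ∑_{i=1}^p log(n + p − 2i + 1), so the risk comparison between the best D(p)-equivariant estimator and Stein's estimator is strict whenever p ≥ 2. -/
/-- Strict risk comparison: `∑_{i=1}^p log (n - i + 1) < ∑_{i=1}^p log (n + p - 2i + 1)`
for `n ≥ p ≥ 2`. -/
theorem sum_log_risk_D_lt_risk_Stein
    (n p : ℕ) (hp : 2 ≤ p) (hnp : p ≤ n) :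
    ∑ i ∈ Finset.Icc 1 p, Real.log ((n : ℝ) - i + 1) <
      ∑ i ∈ Finset.Icc 1 p, Real.log ((n : ℝ) + p - 2 * i + 1) := by
  apply Finset.sum_lt_sum
  · intro i hi
    simp only [Finset.mem_Icc] at hi
    have h1 : (1 : ℝ) ≤ i := by exact_mod_cast hi.1
    have h2 : (i : ℝ) ≤ p := by exact_mod_cast hi.2
    have h3 : (p : ℝ) ≤ n := by exact_mod_cast hnp
    apply Real.log_le_log (by linarith) (by linarith)
  · refine ⟨1, Finset.mem_Icc.mpr ⟨le_refl 1, by omega⟩, ?_⟩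
    have h2 : (2 : ℝ) ≤ p := by exact_mod_cast hp
    have h3 : (p : ℝ) ≤ n := by exact_mod_cast hnp
    apply Real.log_lt_log (by push_cast; linarith)
    push_cast
    linarith
end

section
/- Let n and p be natural numbers with n ≥ p ≥ 2. Then ∑_{i=1}^p log(n + p − 2i + 1) < p · log n, so Stein's estimator strictly improves on the maximum likelihood estimator in minimum risk under the Stein loss whenever p ≥ 2 (the Stein phenomenon). -/
/-- Stein phenomenon (strict form): `∑_{i=1}^p log (n + p - 2i + 1) < p * log n`
for `n ≥ p ≥ 2`. -/
theorem sum_log_risk_Stein_lt_risk_MLE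
    (n p : ℕ) (hp : 2 ≤ p) (hnp : p ≤ n) :
    ∑ i ∈ Finset.Icc 1 p, Real.log ((n : ℝ) + p - 2 * i + 1) <
      (p : ℝ) * Real.log (n : ℝ) := by
  have hp0 : (0:ℝ) < p := by positivity
  have hcard : (Finset.Icc 1 p).card = p := by simp
  -- Gauss sum over `Icc 1 p`
  have hGaussNat : (∑ i ∈ Finset.Icc 1 p, i) * 2 = (p + 1) * p := by
    have h2 : ∑ i ∈ Finset.Icc 1 p, i = ∑ i ∈ Finset.range (p+1), i := by
      rw [Finset.range_eq_Ico, ← Finset.Ico_add_one_right_eq_Icc]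
      refine Finset.sum_subset (fun x hx => ?_) (fun x hx hx2 => ?_)
      · simp only [Finset.mem_Ico] at *; omega
      · simp only [Finset.mem_Ico] at *; omega
    rw [h2, Finset.sum_range_id_mul_two]; simp
  have hGauss : (∑ i ∈ Finset.Icc 1 p, (i:ℝ)) * 2 = ((p:ℝ) + 1) * p := by
    have := congrArg (Nat.cast (R := ℝ)) hGaussNat
    push_cast at this
    linarith [this]
  -- the mean of the arguments is `n`
  have hmean : ∑ i ∈ Finset.Icc 1 p, ((n:ℝ) + p - 2 * i + 1) = p * n := by
    have : ∀ i : ℕ, (n:ℝ) + p - 2 * i + 1 = ((n:ℝ) + p + 1) - 2 * i := fun i => by ring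
    simp_rw [this, Finset.sum_sub_distrib, Finset.sum_const, hcard, ← Finset.mul_sum,
      nsmul_eq_mul]
    nlinarith [hGauss]
  -- strict Jensen inequality for `log`
  have key := strictConcaveOn_log_Ioi.lt_map_sum
    (t := Finset.Icc 1 p) (w := fun _ => (p:ℝ)⁻¹)
    (p := fun i : ℕ => (n : ℝ) + p - 2 * i + 1)
    (fun i _ => by positivity)
    (by rw [Finset.sum_const, hcard, nsmul_eq_mul, mul_inv_cancel₀ hp0.ne'])
    (fun i hi => by
      simp only [Finset.mem_Icc] at hi
      have h1 : (i:ℝ) ≤ p := by exact_mod_cast hi.2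
      have h2 : (p:ℝ) ≤ n := by exact_mod_cast hnp
      simp only [Set.mem_Ioi]
      linarith)
    ⟨1, by simp only [Finset.mem_Icc]; omega, 2, by simp only [Finset.mem_Icc]; omega,
      by push_cast; norm_num⟩
  simp only [smul_eq_mul] at key
  rw [← Finset.mul_sum, ← Finset.mul_sum, hmean] at key
  have hn0 : (0:ℝ) < n := lt_of_lt_of_le hp0 (by exact_mod_cast hnp)
  rw [show (p:ℝ)⁻¹ * ((p:ℝ) * n) = n by field_simp] at key
  calc ∑ i ∈ Finset.Icc 1 p, Real.log ((n : ℝ) + p - 2 * i + 1)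
      = (p:ℝ) * ((p:ℝ)⁻¹ * ∑ i ∈ Finset.Icc 1 p, Real.log ((n : ℝ) + p - 2 * i + 1)) := by
        field_simp
    _ < (p:ℝ) * Real.log n := by
        exact (mul_lt_mul_iff_right₀ hp0).2 key
end

section
/- Let a, b, x be real numbers with a < x < b. Then the principal value integral PV ∫_a^b √((t−a)(b−t)) / (t−x) dt, defined as the limit as ε → 0⁺ of ∫_a^{x−ε} √((t−a)(b−t))/(t−x) dt + ∫_{x+ε}^b √((t−a)(b−t))/(t−x) dt, exists and equals π · ((a+b)/2 − x). -/
/-!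
With `s = √((t - a)(b - t))`, `k = √((x - a)(b - x))` and the identity
`(t - a)(b - t) - (x - a)(b - x) = (t - x)(a + b - t - x)`, the integrand splits as
`s / (t - x) = (a + b - 2t) / (2s) + ((a + b)/2 - x) / s + k² / ((t - x) s)`,
the derivatives of `s`, of `((a + b)/2 - x) · arcsin ((2t - a - b)/(b - a))` and of
`k · log (|t - x| / N(t))` with `N = logArg`.
The only singular part of this primitive, `k · log |t - x|`, is even about `x` and cancels in the
symmetric principal value sum; at the endpoints the logarithmic terms agree, so what is left is the
jump `π ((a + b)/2 - x)` of the arcsin term.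
-/

open Real Set Filter Topology

namespace SemicirclePV

variable (a b x : ℝ)

noncomputable def logArg (t : ℝ) : ℝ :=
  ((b - x) * (t - a) + (x - a) * (b - t)) / 2 + √((x - a) * (b - x)) * √((t - a) * (b - t))

noncomputable def regularPart (t : ℝ) : ℝ :=
  √((t - a) * (b - t)) + ((a + b) / 2 - x) * arcsin ((2 * t - a - b) / (b - a))
    - √((x - a) * (b - x)) * log (logArg a b x t)

/-- `Real.log (t - x)` is `log |t - x|`, so this is a primitive on both sides of `x`. -/
noncomputable def primitive (t : ℝ) : ℝ :=
  regularPart a b x t + √((x - a) * (b - x)) * log (t - x)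

variable {a b x}

theorem hasDerivAt_sqrt_mul_sub {t : ℝ} (hat : a < t) (htb : t < b) :
    HasDerivAt (fun u => √((u - a) * (b - u)))
      ((a + b - 2 * t) / (2 * √((t - a) * (b - t)))) t := by
  have hpoly : HasDerivAt (fun u => (u - a) * (b - u)) (a + b - 2 * t) t := by
    refine (((hasDerivAt_id t).sub_const a).mul
      ((hasDerivAt_const t b).sub (hasDerivAt_id t))).congr_deriv ?_
    simp only [Pi.sub_apply, id_eq]; ring
  exact (hpoly.sqrt (mul_pos (sub_pos.2 hat) (sub_pos.2 htb)).ne').congr_deriv (by ring)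

theorem hasDerivAt_arcsin_affine {t : ℝ} (hat : a < t) (htb : t < b) :
    HasDerivAt (fun u => arcsin ((2 * u - a - b) / (b - a))) (1 / √((t - a) * (b - t))) t := by
  have hba : 0 < b - a := by linarith
  have hlin : HasDerivAt (fun u => (2 * u - a - b) / (b - a)) (2 / (b - a)) t := by
    refine ((((hasDerivAt_id t).const_mul 2).sub_const a).sub_const b).div_const (b - a)
      |>.congr_deriv (by simp)
  have hne₁ : (2 * t - a - b) / (b - a) ≠ -1 := by
    rw [ne_eq, div_eq_iff hba.ne']; intro h; linarith
  have hne₂ : (2 * t - a - b) / (b - a) ≠ 1 := by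
    rw [ne_eq, div_eq_iff hba.ne']; intro h; linarith
  have hroot : √(1 - ((2 * t - a - b) / (b - a)) ^ 2) = 2 / (b - a) * √((t - a) * (b - t)) := by
    rw [show 1 - ((2 * t - a - b) / (b - a)) ^ 2 = (2 / (b - a)) ^ 2 * ((t - a) * (b - t)) by
      field_simp; ring, sqrt_mul (sq_nonneg _), sqrt_sq (by positivity)]
  have hs : 0 < √((t - a) * (b - t)) := sqrt_pos.2 (mul_pos (sub_pos.2 hat) (sub_pos.2 htb))
  refine ((hasDerivAt_arcsin hne₁ hne₂).comp t hlin).congr_deriv ?_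
  rw [hroot]
  field_simp

theorem logArg_pos (hax : a < x) (hxb : x < b) {t : ℝ} (hat : a ≤ t) (htb : t ≤ b) :
    0 < logArg a b x t := by
  have hroots : 0 ≤ √((x - a) * (b - x)) * √((t - a) * (b - t)) := by positivity
  unfold logArg
  rcases hat.eq_or_lt with rfl | hat
  · nlinarith
  · nlinarith [mul_pos (sub_pos.2 hxb) (sub_pos.2 hat),
      mul_nonneg (sub_pos.2 hax).le (sub_nonneg.2 htb)]

theorem hasDerivAt_logArg {t : ℝ} (hat : a < t) (htb : t < b) :
    HasDerivAt (logArg a b x)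
      ((b - x - (x - a)) / 2
        + √((x - a) * (b - x)) * ((a + b - 2 * t) / (2 * √((t - a) * (b - t))))) t := by
  have hlin : HasDerivAt (fun u => ((b - x) * (u - a) + (x - a) * (b - u)) / 2)
      ((b - x - (x - a)) / 2) t := by
    refine ((((hasDerivAt_id t).sub_const a).const_mul (b - x)).add
      (((hasDerivAt_const t b).sub (hasDerivAt_id t)).const_mul (x - a))).div_const 2
      |>.congr_deriv ?_
    simp only [mul_one]; ring
  exact hlin.add ((hasDerivAt_sqrt_mul_sub hat htb).const_mul _)

theorem hasDerivAt_log_logArg_sub_log (hax : a < x) (hxb : x < b) {t : ℝ} (hat : a < t)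
    (htb : t < b) (htx : t ≠ x) :
    HasDerivAt (fun u => log (logArg a b x u) - log (u - x))
      (-√((x - a) * (b - x)) / ((t - x) * √((t - a) * (b - t)))) t := by
  have hs2 : √((t - a) * (b - t)) ^ 2 = (t - a) * (b - t) := sq_sqrt (by nlinarith)
  have hs : 0 < √((t - a) * (b - t)) := sqrt_pos.2 (mul_pos (sub_pos.2 hat) (sub_pos.2 htb))
  have hk2 : √((x - a) * (b - x)) ^ 2 = (x - a) * (b - x) := sq_sqrt (by nlinarith)
  have hN := logArg_pos hax hxb hat.le htb.le
  have htx' : t - x ≠ 0 := sub_ne_zero.2 htx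
  refine (((hasDerivAt_logArg hat htb).log hN.ne').sub
    (((hasDerivAt_id t).sub_const x).log htx')).congr_deriv ?_
  unfold logArg at hN ⊢
  simp only [id_eq]
  set k := √((x - a) * (b - x))
  set s := √((t - a) * (b - t))
  set N := ((b - x) * (t - a) + (x - a) * (b - t)) / 2 + k * s with hNdef
  have hN0 : N ≠ 0 := hN.ne'
  field_simp
  linear_combination (2 * k - 2 * s) * hNdef - 2 * k * hs2 + 2 * s * hk2

theorem hasDerivAt_primitive (hax : a < x) (hxb : x < b) {t : ℝ} (hat : a < t) (htb : t < b)
    (htx : t ≠ x) :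
    HasDerivAt (primitive a b x) (√((t - a) * (b - t)) / (t - x)) t := by
  have hs2 : √((t - a) * (b - t)) ^ 2 = (t - a) * (b - t) := sq_sqrt (by nlinarith)
  have hs : 0 < √((t - a) * (b - t)) := sqrt_pos.2 (mul_pos (sub_pos.2 hat) (sub_pos.2 htb))
  have hk2 : √((x - a) * (b - x)) ^ 2 = (x - a) * (b - x) := sq_sqrt (by nlinarith)
  have htx' : t - x ≠ 0 := sub_ne_zero.2 htx
  have hsplit : primitive a b x = fun u => √((u - a) * (b - u))
      + ((a + b) / 2 - x) * arcsin ((2 * u - a - b) / (b - a))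
      - √((x - a) * (b - x)) * (log (logArg a b x u) - log (u - x)) := by
    funext u; simp only [primitive, regularPart]; ring
  rw [hsplit]
  refine ((hasDerivAt_sqrt_mul_sub hat htb).add
    ((hasDerivAt_arcsin_affine hat htb).const_mul _)).sub
    ((hasDerivAt_log_logArg_sub_log hax hxb hat htb htx).const_mul _) |>.congr_deriv ?_
  set k := √((x - a) * (b - x))
  set s := √((t - a) * (b - t))
  field_simp
  linear_combination 2 * hk2 - 2 * hs2

theorem continuousAt_regularPart (hax : a < x) (hxb : x < b) {t : ℝ} (ht : t ∈ Icc a b) :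
    ContinuousAt (regularPart a b x) t := by
  have hlog : ContinuousAt (fun u => log (logArg a b x u)) t :=
    (by unfold logArg; fun_prop : ContinuousAt (logArg a b x) t).log
      (logArg_pos hax hxb ht.1 ht.2).ne'
  unfold regularPart
  fun_prop

theorem continuousAt_primitive (hax : a < x) (hxb : x < b) {t : ℝ} (ht : t ∈ Icc a b)
    (htx : t ≠ x) : ContinuousAt (primitive a b x) t :=
  (continuousAt_regularPart hax hxb ht).add
    (continuousAt_const.mul ((continuousAt_id.sub continuousAt_const).log (sub_ne_zero.2 htx)))

theorem integral_eq_primitive_sub (hax : a < x) (hxb : x < b) {c d : ℝ} (hac : a ≤ c)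
    (hcd : c ≤ d) (hdb : d ≤ b) (hx : x ∉ Icc c d) :
    ∫ t in c..d, √((t - a) * (b - t)) / (t - x) = primitive a b x d - primitive a b x c := by
  have hne : ∀ t ∈ Icc c d, t ≠ x := fun t ht htx => hx (htx ▸ ht)
  refine intervalIntegral.integral_eq_sub_of_hasDerivAt_of_le hcd
    (fun t ht => (continuousAt_primitive hax hxb ⟨hac.trans ht.1, ht.2.trans hdb⟩
      (hne t ht)).continuousWithinAt)
    (fun t ht => hasDerivAt_primitive hax hxb (hac.trans_lt ht.1) (ht.2.trans_le hdb)
      (hne t (Ioo_subset_Icc_self ht)))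
    (ContinuousOn.intervalIntegrable fun t ht => ?_)
  rw [uIcc_of_le hcd] at ht
  have htx : t - x ≠ 0 := sub_ne_zero.2 (hne t ht)
  exact ContinuousAt.continuousWithinAt (by fun_prop (disch := exact htx))

theorem primitive_sub_primitive (hax : a < x) (hxb : x < b) :
    primitive a b x b - primitive a b x a = π * ((a + b) / 2 - x) := by
  have hba : b - a ≠ 0 := by linarith
  have hb : logArg a b x b = (b - x) * ((b - a) / 2) := by simp [logArg]; ring
  have ha : logArg a b x a = (x - a) * ((b - a) / 2) := by simp [logArg]; ring
  have hb1 : (2 * b - a - b) / (b - a) = 1 := by field_simp; ring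
  have ha1 : (2 * a - a - b) / (b - a) = -1 := by field_simp; ring
  simp only [primitive, regularPart, hb, ha, hb1, ha1, arcsin_one, arcsin_neg_one, sub_self,
    mul_zero, zero_mul, sqrt_zero]
  rw [log_mul (by linarith) (by positivity), log_mul (by linarith) (by positivity),
    show a - x = -(x - a) by ring, log_neg_eq_log]
  ring

theorem tendsto_primitive_sub_primitive (hax : a < x) (hxb : x < b) :
    Tendsto (fun ε => primitive a b x (x - ε) - primitive a b x (x + ε)) (𝓝 0) (𝓝 0) := by
  have hgap : ∀ ε, primitive a b x (x - ε) - primitive a b x (x + ε)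
      = regularPart a b x (x - ε) - regularPart a b x (x + ε) := by
    intro ε
    simp only [primitive, show x - ε - x = -ε by ring, add_sub_cancel_left, log_neg_eq_log]
    ring
  have hreg := continuousAt_regularPart hax hxb ⟨hax.le, hxb.le⟩
  have hcont : ContinuousAt (fun ε => regularPart a b x (x - ε) - regularPart a b x (x + ε)) 0 :=
    (hreg.comp_of_eq (by fun_prop) (sub_zero x)).sub (hreg.comp_of_eq (by fun_prop) (add_zero x))
  simpa [hgap] using hcont.tendsto

end SemicirclePV

/-- The principal value integral `PV ∫_a^b √((t-a)(b-t))/(t-x) dt` exists for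
`a < x < b` and equals `π ((a+b)/2 - x)`. -/
theorem principalValue_sqrt_semicircle
    (a b x : ℝ) (hax : a < x) (hxb : x < b) :
    Filter.Tendsto
      (fun ε : ℝ =>
        (∫ t in a..(x - ε), Real.sqrt ((t - a) * (b - t)) / (t - x)) +
          ∫ t in (x + ε)..b, Real.sqrt ((t - a) * (b - t)) / (t - x))
      (nhdsWithin 0 (Set.Ioi 0))
      (nhds (Real.pi * ((a + b) / 2 - x))) := by
  open SemicirclePV in
  have hsplit : ∀ᶠ ε in 𝓝[>] 0,
      (primitive a b x b - primitive a b x a)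
          + (primitive a b x (x - ε) - primitive a b x (x + ε))
        = (∫ t in a..(x - ε), √((t - a) * (b - t)) / (t - x))
          + ∫ t in (x + ε)..b, √((t - a) * (b - t)) / (t - x) := by
    filter_upwards [Ioo_mem_nhdsGT (lt_min (sub_pos.2 hax) (sub_pos.2 hxb))] with ε ⟨hε, hεx⟩
    have hεa := hεx.trans_le (min_le_left _ _)
    have hεb := hεx.trans_le (min_le_right _ _)
    rw [integral_eq_primitive_sub hax hxb le_rfl (by linarith) (by linarith)
        (fun h => by linarith [h.2]),
      integral_eq_primitive_sub hax hxb (by linarith) (by linarith) le_rfl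
        (fun h => by linarith [h.1])]
    ring
  rw [← primitive_sub_primitive hax hxb, ← add_zero (primitive a b x b - _)]
  exact (tendsto_const_nhds.add
    ((tendsto_primitive_sub_primitive hax hxb).mono_left nhdsWithin_le_nhds)).congr' hsplit
end

section
/- Let n ≥ p ≥ 1 be natural numbers. Then the set of n-tuples (x₁, …, x_n) ∈ (ℝᵖ)ⁿ for which the matrix A = ∑_{i=1}^n x_i x_iᵀ is NOT positive definite has Lebesgue measure zero in (ℝᵖ)ⁿ ≅ ℝ^{np}. (Hence, for X₁, …, X_n i.i.d. N_p(0, Σ) with Σ positive definite and n ≥ p, the matrix A = ∑ X_i X_iᵀ is positive definite with probability one.) -/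
/-!
Writing `X` for the `n × p` matrix with rows `xᵢ`, the sum `∑ xᵢ xᵢᵀ` is `Xᵀ X`, which is positive
definite as soon as the rows span `ℝᵖ`; this holds whenever `x₁, …, x_p` are linearly independent.
For a Haar measure on a space of dimension `d ≥ k`, almost every `k`-tuple is linearly independent:
by Fubini, once `x₂, …, x_k` are independent, `x₁` must avoid their span, a proper subspace and
hence a null set. The condition on `x₁, …, x_p` is pulled back to `(ℝᵖ)ⁿ` along the surjective
linear map `x ↦ (x₁, …, x_p)`, which preserves null sets between Haar measures.
-/

open Matrix MeasureTheory

open Measure Module Set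

section AddHaar

variable {E : Type*} [NormedAddCommGroup E] [NormedSpace ℝ E] [MeasurableSpace E] [BorelSpace E]
  [FiniteDimensional ℝ E] (μ : Measure E) [μ.IsAddHaarMeasure]

theorem addHaar_span_range_eq_zero {ι : Type*} [Fintype ι] (w : ι → E)
    (h : Fintype.card ι < finrank ℝ E) : μ (Submodule.span ℝ (range w)) = 0 := by
  refine addHaar_submodule μ _ fun htop => ?_
  have := finrank_range_le_card (R := ℝ) w
  rw [Set.finrank, htop, finrank_top] at this
  omega

theorem ae_linearIndependent_pi : ∀ {k : ℕ}, k ≤ finrank ℝ E →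
    ∀ᵐ v ∂(Measure.pi fun _ : Fin k => μ), LinearIndependent ℝ v
  | 0, _ => Filter.Eventually.of_forall fun _ => linearIndependent_empty_type
  | k + 1, hk => by
    let e := MeasurableEquiv.piFinSuccAbove (fun _ : Fin (k + 1) => E) 0
    have he : MeasurePreserving e _ _ := measurePreserving_piFinSuccAbove (fun _ => μ) 0
    have hmeas : MeasurableSet {q : E × (Fin k → E) | LinearIndependent ℝ (e.symm q)} :=
      e.symm.measurable isOpen_setOfPred_linearIndependent.measurableSet
    suffices ∀ᵐ q ∂μ.prod (Measure.pi fun _ : Fin k => μ), LinearIndependent ℝ (e.symm q) by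
      simpa using he.quasiMeasurePreserving.ae this
    rw [ae_prod_iff_ae_ae hmeas, ae_ae_comm (by simpa using hmeas)]
    filter_upwards [ae_linearIndependent_pi (k := k) (by omega)] with w hw
    filter_upwards [measure_eq_zero_iff_ae_notMem.mp
      (addHaar_span_range_eq_zero μ w (by simpa using hk))] with a ha
    change LinearIndependent ℝ (Fin.insertNth 0 a w)
    rw [Fin.insertNth_zero', linearIndependent_finCons]
    exact ⟨hw, ha⟩

end AddHaar

theorem posDef_sum_vecMulVec_self_of_span_eq_top {ι m : Type*} [Fintype ι] [Fintype m]
    (x : ι → m → ℝ) (hx : Submodule.span ℝ (range x) = ⊤) : PosDef (∑ i, vecMulVec (x i) (x i)) := by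
  have hsum : ∑ i, vecMulVec (x i) (x i) = (of x)ᴴ * of x := by
    ext j k
    simp [mul_apply, vecMulVec_apply, Matrix.sum_apply]
  rw [hsum]
  refine PosDef.conjTranspose_mul_self _ ?_
  rw [← coe_mulVecLin, ← LinearMap.ker_eq_bot, LinearMap.ker_eq_bot']
  intro v hv
  have horth : ∀ w ∈ Submodule.span ℝ (range x), w ⬝ᵥ v = 0 := by
    intro w hw
    induction hw using Submodule.span_induction with
    | mem _ hw => obtain ⟨i, rfl⟩ := hw; exact congrFun hv i
    | zero => exact zero_dotProduct v
    | add _ _ _ _ h₁ h₂ => rw [add_dotProduct, h₁, h₂, add_zero]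
    | smul c _ _ h => rw [smul_dotProduct, h, smul_zero]
  exact dotProduct_self_eq_zero.mp (horth v (hx ▸ Submodule.mem_top))

theorem measure_not_posDef_sum_outer_eq_zero_general
    (n p : ℕ) (hnp : p ≤ n) :
    volume {x : Fin n → Fin p → ℝ |
      ¬ Matrix.PosDef (∑ i, Matrix.vecMulVec (x i) (x i))} = 0 := by
  rw [← ae_iff]
  let L : (Fin n → Fin p → ℝ) →ₗ[ℝ] (Fin p → Fin p → ℝ) :=
    LinearMap.funLeft ℝ (Fin p → ℝ) (Fin.castLE hnp)
  have hL : Function.Surjective L :=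
    LinearMap.funLeft_surjective_of_injective _ _ _ (Fin.castLE_injective hnp)
  have h_indep : ∀ᵐ x : Fin n → Fin p → ℝ, LinearIndependent ℝ (L x) :=
    (ae_comp_linearMap_mem_iff L volume volume hL
      isOpen_setOfPred_linearIndependent.measurableSet).2 (ae_linearIndependent_pi volume (by simp))
  filter_upwards [h_indep] with x hx
  have hspan : Submodule.span ℝ (range (L x)) = ⊤ := hx.span_eq_top_of_card_eq_finrank' (by simp)
  exact posDef_sum_vecMulVec_self_of_span_eq_top x
    (eq_top_mono (Submodule.span_mono (range_comp_subset_range (Fin.castLE hnp) x)) hspan)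

/-- For `n ≥ p ≥ 1`, the set of `n`-tuples `(x₁, …, xₙ)` of vectors in `ℝᵖ`
for which `∑ i, xᵢ xᵢᵀ` is not positive definite has Lebesgue measure zero. -/
theorem measure_not_posDef_sum_outer_eq_zero
    (n p : ℕ) (hp : 1 ≤ p) (hnp : p ≤ n) :
    volume {x : Fin n → Fin p → ℝ |
      ¬ Matrix.PosDef (∑ i, Matrix.vecMulVec (x i) (x i))} = 0 :=
  measure_not_posDef_sum_outer_eq_zero_general n p hnp
end
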